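/- Let γ ∈ ℝ and let v : ℝ → ℝ be twice continuously differentiable and 2π-periodic. Then (1/(2π)) ∫₀^{2π} (1 − v''(x)) · [ (1/2)·(v²)'(x) + (γ/6)·v'(x)³ − 𝒟(v + (1/2)(v')²)(x) ] dx = (γ/(12π)) ∫₀^{2π} v'(x)³ dx; that is, the constant term 𝒞(v) in the integral form of the modified Hunter–Saxton equation equals (γ/(12π))∫ v_x³ dx. -/

import Mathlib

/-!
Put `u = 𝒟(v + v'²/2)`: it is `2π`-periodic with mean zero and `u' = v + v'²/2 − f̄`.
Using this to eliminate `u'`, everything in the integrand except `γ/6 · v'³ − u` is the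
derivative of the periodic function `H = −v v'²/2 − γ/24 · v'⁴ + v' u + f̄ v`, so it
integrates to zero over a period, and `∫ u = 0` leaves `γ/6 ∫ v'³`.
-/

open Real intervalIntegral

/-- The mean value `f̄ = (1/(2π)) ∫₀^{2π} f(y) dy` of a `2π`-periodic function. -/
noncomputable def fmean (f : ℝ → ℝ) : ℝ := (1 / (2 * π)) * ∫ y in (0:ℝ)..(2 * π), f y

/-- The antiderivative operator `𝒟`, the realization on continuous functions of the
maximal Tseng generalized inverse `∂ₓ†` of the spatial derivative on `𝕊 = ℝ/2πℤ`. -/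
noncomputable def Dop (f : ℝ → ℝ) (x : ℝ) : ℝ :=
  (∫ y in (0:ℝ)..x, (f y - fmean f)) -
    (1 / (2 * π)) * ∫ z in (0:ℝ)..(2 * π), (∫ y in (0:ℝ)..z, (f y - fmean f))

open Function
open MeasureTheory (volume)

theorem Function.Periodic.deriv {f : ℝ → ℝ} {T : ℝ} (hf : Periodic f T) :
    Periodic (_root_.deriv f) T := fun x => by
  rw [← deriv_comp_add_const, funext hf]

theorem Function.Periodic.integral_eq_zero_of_hasDerivAt {F F' : ℝ → ℝ} {T : ℝ}
    (hF : Periodic F T) (hderiv : ∀ x, HasDerivAt F (F' x) x)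
    (hint : IntervalIntegrable F' volume 0 T) :
    ∫ x in 0..T, F' x = 0 := by
  rw [integral_eq_sub_of_hasDerivAt (fun x _ => hderiv x) hint, ← zero_add T, hF 0, sub_self]

theorem Function.Periodic.primitive {g : ℝ → ℝ} {T : ℝ} (hg : Periodic g T)
    (hint : ∀ a b, IntervalIntegrable g volume a b) (hzero : ∫ x in 0..T, g x = 0) :
    Periodic (fun x => ∫ y in 0..x, g y) T := fun x => by
  simp only
  rw [hg.intervalIntegral_add_eq_add 0 x hint, hg.intervalIntegral_add_eq 0 0, zero_add, hzero,
    add_zero]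

theorem integral_sub_fmean {f : ℝ → ℝ} (hf : IntervalIntegrable f volume 0 (2 * π)) :
    ∫ y in 0..2 * π, (f y - fmean f) = 0 := by
  rw [integral_sub hf intervalIntegrable_const, intervalIntegral.integral_const, fmean,
    smul_eq_mul, sub_zero]
  field_simp [pi_ne_zero]
  ring

section Dop

variable {f : ℝ → ℝ}

theorem Dop_eq_primitive_sub_fmean (f : ℝ → ℝ) :
    Dop f = fun x => (∫ y in 0..x, (f y - fmean f)) -
      fmean (fun z => ∫ y in 0..z, (f y - fmean f)) := rfl

theorem hasDerivAt_Dop (hf : Continuous f) (x : ℝ) : HasDerivAt (Dop f) (f x - fmean f) x := by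
  rw [Dop_eq_primitive_sub_fmean]
  exact (((hf.sub continuous_const).integral_hasStrictDerivAt 0 x).hasDerivAt).sub_const _

theorem continuous_Dop (hf : Continuous f) : Continuous (Dop f) :=
  continuous_iff_continuousAt.2 fun x => (hasDerivAt_Dop hf x).continuousAt

theorem periodic_Dop (hf : Continuous f) (hper : Periodic f (2 * π)) :
    Periodic (Dop f) (2 * π) := by
  rw [Dop_eq_primitive_sub_fmean]
  have hint : ∀ a b, IntervalIntegrable (fun y => f y - fmean f) volume a b := fun a b =>
    (hf.sub continuous_const).intervalIntegrable a b
  have hper' : Periodic (fun y => f y - fmean f) (2 * π) := fun x => by simp only [hper x]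
  have hprim := hper'.primitive hint (integral_sub_fmean (hf.intervalIntegrable _ _))
  exact fun x => by simp only [hprim x]

theorem integral_Dop (hf : Continuous f) : ∫ x in 0..2 * π, Dop f x = 0 := by
  have hprim : Continuous fun z => ∫ y in 0..z, (f y - fmean f) :=
    continuous_primitive (fun a b => (hf.sub continuous_const).intervalIntegrable a b) 0
  rw [Dop_eq_primitive_sub_fmean]
  exact integral_sub_fmean (hprim.intervalIntegrable _ _)

end Dop

section Integrand

noncomputable def hunterSaxtonPotential (γ m : ℝ) (v u : ℝ → ℝ) (x : ℝ) : ℝ :=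
  -(1 / 2) * v x * deriv v x ^ 2 - γ / 24 * deriv v x ^ 4 + deriv v x * u x + m * v x

variable {v u : ℝ → ℝ} (γ m : ℝ)

theorem hasDerivAt_hunterSaxtonPotential {x : ℝ} (hv : DifferentiableAt ℝ v x)
    (hv' : DifferentiableAt ℝ (deriv v) x)
    (hu : HasDerivAt u (v x + 1 / 2 * deriv v x ^ 2 - m) x) :
    HasDerivAt (hunterSaxtonPotential γ m v u)
      ((1 - deriv (deriv v) x) * (v x * deriv v x + γ / 6 * deriv v x ^ 3 - u x) -
        (γ / 6 * deriv v x ^ 3 - u x)) x := by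
  have hv := hv.hasDerivAt
  have hv' := hv'.hasDerivAt
  refine ((((hv.const_mul (-(1 / 2))).mul (hv'.fun_pow 2)).sub
    ((hv'.fun_pow 4).const_mul (γ / 24))).add (hv'.mul hu)).add (hv.const_mul m)
    |>.congr_deriv ?_
  push_cast
  ring

theorem integral_one_sub_deriv_deriv_mul {T : ℝ} (hv : ContDiff ℝ 2 v) (hper : Periodic v T)
    (hu : ∀ x, HasDerivAt u (v x + 1 / 2 * deriv v x ^ 2 - m) x) (hu_per : Periodic u T) :
    ∫ x in 0..T, (1 - deriv (deriv v) x) * (v x * deriv v x + γ / 6 * deriv v x ^ 3 - u x) =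
      ∫ x in 0..T, (γ / 6 * deriv v x ^ 3 - u x) := by
  have hcv : Continuous v := hv.continuous
  have hcv' : Continuous (deriv v) := hv.continuous_deriv one_le_two
  have hcv'' : Continuous (deriv (deriv v)) := (hv.deriv' (n := 1)).continuous_deriv le_rfl
  have hcu : Continuous u := continuous_iff_continuousAt.2 fun x => (hu x).continuousAt
  have hpotential : Periodic (hunterSaxtonPotential γ m v u) T := fun x => by
    simp only [hunterSaxtonPotential, hper x, hper.deriv x, hu_per x]
  have hexact := hpotential.integral_eq_zero_of_hasDerivAt
    (fun x => hasDerivAt_hunterSaxtonPotential γ m (hv.differentiable two_ne_zero x)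
      ((hv.deriv' (n := 1)).differentiable one_ne_zero x) (hu x))
    (by apply Continuous.intervalIntegrable; fun_prop)
  rwa [integral_sub (by apply Continuous.intervalIntegrable; fun_prop)
    (by apply Continuous.intervalIntegrable; fun_prop), sub_eq_zero] at hexact

end Integrand

/-- The constant term `𝒞(v)` in the integral form of the modified Hunter–Saxton equation
equals `(γ/(12π)) ∫₀^{2π} v_x³ dx`. -/
theorem modifiedHunterSaxton_constant_term (γ : ℝ) (v : ℝ → ℝ)
    (hv : ContDiff ℝ 2 v) (hper : Function.Periodic v (2 * π)) :
    (1 / (2 * π)) * ∫ x in (0:ℝ)..(2 * π),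
        (1 - deriv (deriv v) x) *
          ((1 / 2) * deriv (fun y => (v y) ^ 2) x + (γ / 6) * (deriv v x) ^ 3 -
            Dop (fun y => v y + (1 / 2) * (deriv v y) ^ 2) x)
      = (γ / (12 * π)) * ∫ x in (0:ℝ)..(2 * π), (deriv v x) ^ 3 := by
  have hcv' : Continuous (deriv v) := hv.continuous_deriv one_le_two
  have hf : Continuous fun y => v y + 1 / 2 * deriv v y ^ 2 := by fun_prop
  have hf_per : Periodic (fun y => v y + 1 / 2 * deriv v y ^ 2) (2 * π) := fun x => by
    simp only [hper x, hper.deriv x]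
  have hsq : ∀ x, 1 / 2 * deriv (fun y => v y ^ 2) x = v x * deriv v x := fun x => by
    rw [((hv.differentiable two_ne_zero x).hasDerivAt.fun_pow 2).deriv]
    push_cast
    ring
  simp_rw [hsq]
  rw [integral_one_sub_deriv_deriv_mul γ _ hv hper (hasDerivAt_Dop hf) (periodic_Dop hf hf_per),
    integral_sub (by apply Continuous.intervalIntegrable; fun_prop)
      ((continuous_Dop hf).intervalIntegrable _ _), integral_Dop hf, integral_const_mul]
  field_simp
  ring
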